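/- arXiv:math/0606057 — 8 statements merged into one kernel-verified Lean document; each statement's English description precedes it below -/
import Mathlib

section
/- Every prime p with p ≡ 1 (mod 6) can be written as p = a² + 3b² for some integers a, b. -/
set_option maxHeartbeats 1000000

theorem euler_e164_thm8 (p : ℕ) (hp : p.Prime) (h : p % 6 = 1) :
    ∃ a b : ℤ, (p : ℤ) = a ^ 2 + 3 * b ^ 2 := by
  haveI : Fact p.Prime := ⟨hp⟩
  have hp7 : 7 ≤ p := by have := hp.two_le; omega
  -- a square root of -3 in ZMod p
  obtain ⟨c, hc⟩ : ∃ c : ZMod p, c ^ 2 = -3 := by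
    haveI : Fact (Nat.Prime 3) := ⟨by norm_num⟩
    have h3 : 3 ∣ Fintype.card (ZMod p)ˣ := by
      rw [ZMod.card_units p]; omega
    obtain ⟨u, hu⟩ := exists_prime_orderOf_dvd_card 3 h3
    set g : ZMod p := (u : ZMod p) with hg
    have hg3 : g ^ 3 = 1 := by
      have : u ^ 3 = 1 := by rw [← hu]; exact pow_orderOf_eq_one u
      rw [hg, ← Units.val_pow_eq_pow_val, this, Units.val_one]
    have hgne : g ≠ 1 := by
      intro hgg
      have : u = 1 := Units.ext hgg
      rw [this] at hu; simp at hu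
    have key : g ^ 2 + g + 1 = 0 := by
      have hfac : (g - 1) * (g ^ 2 + g + 1) = 0 := by ring_nf; linear_combination hg3
      rcases mul_eq_zero.mp hfac with h1 | h1
      · exact absurd (by linear_combination h1) hgne
      · exact h1
    exact ⟨2 * g + 1, by linear_combination 4 * key⟩
  -- Thue's lemma setup
  set N := Nat.sqrt p with hNdef
  have hN1 : p < (N + 1) * (N + 1) := by
    have := Nat.lt_succ_sqrt' p
    simpa [pow_two, Nat.succ_eq_add_one] using this
  have hN2 : N * N < p := by
    have hle : N * N ≤ p := by simpa [pow_two] using Nat.sqrt_le' p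
    rcases lt_or_eq_of_le hle with h1 | h1
    · exact h1
    · exfalso
      have hdvd : N ∣ p := Dvd.intro N h1
      rcases (Nat.Prime.eq_one_or_self_of_dvd hp N hdvd) with h2 | h2
      · rw [h2] at h1; omega
      · rw [h2] at h1; nlinarith
  have hcard : Fintype.card (ZMod p) < Fintype.card (Fin (N + 1) × Fin (N + 1)) := by
    simp only [ZMod.card, Fintype.card_prod, Fintype.card_fin]
    exact hN1
  obtain ⟨q1, q2, hqne, hqeq⟩ := Fintype.exists_ne_map_eq_of_card_lt
    (fun q : Fin (N + 1) × Fin (N + 1) => ((q.1 : ℕ) : ZMod p) - c * ((q.2 : ℕ) : ZMod p)) hcard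
  set x : ℤ := (q1.1 : ℕ) - ((q2.1 : ℕ) : ℤ) with hx
  set y : ℤ := (q1.2 : ℕ) - ((q2.2 : ℕ) : ℤ) with hy
  have hcast : (x : ZMod p) = c * (y : ZMod p) := by
    simp only [hx, hy]
    push_cast
    simp only [sub_eq_iff_eq_add] at hqeq ⊢
    linear_combination hqeq
  have hxy : x ≠ 0 ∨ y ≠ 0 := by
    by_contra hcon
    push_neg at hcon
    apply hqne
    have h1 : (q1.1 : ℕ) = (q2.1 : ℕ) := by omega
    have h2 : (q1.2 : ℕ) = (q2.2 : ℕ) := by omega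
    exact Prod.ext (Fin.ext h1) (Fin.ext h2)
  -- p divides x^2 + 3y^2
  have hdvd : (p : ℤ) ∣ x ^ 2 + 3 * y ^ 2 := by
    have : ((x ^ 2 + 3 * y ^ 2 : ℤ) : ZMod p) = 0 := by
      push_cast
      rw [hcast]
      linear_combination ((y : ZMod p)) ^ 2 * hc
    exact (ZMod.intCast_zmod_eq_zero_iff_dvd _ p).mp this
  -- if y = 0 then x = 0 — so both nonzero or at least positive sum
  have hyx : y = 0 → x = 0 := by
    intro hy0
    have hx0 : (p : ℤ) ∣ x := by
      have := hdvd; rw [hy0] at this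
      have h2 : (p : ℤ) ∣ x ^ 2 := by simpa using this
      exact (Nat.prime_iff_prime_int.mp hp).dvd_of_dvd_pow h2
    have hxb : |x| < (p : ℤ) := by
      have h1 : (q1.1 : ℕ) ≤ N := Fin.is_le q1.1
      have h2 : (q2.1 : ℕ) ≤ N := Fin.is_le q2.1
      have : (N : ℤ) < p := by exact_mod_cast (by nlinarith : N < p)
      rw [hx, abs_sub_lt_iff]
      constructor <;> push_cast <;> omega
    exact Int.eq_zero_of_abs_lt_dvd hx0 hxb
  have hpos : 0 < x ^ 2 + 3 * y ^ 2 := by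
    rcases hxy with hx0 | hy0
    · have : 0 < x ^ 2 := by positivity
      nlinarith [sq_nonneg y]
    · have hxne : y ≠ 0 := hy0
      have : 0 < y ^ 2 := by positivity
      nlinarith [sq_nonneg x]
  -- bound: x^2 + 3y^2 < 4p
  have hbound : x ^ 2 + 3 * y ^ 2 < 4 * (p : ℤ) := by
    have hx1 : (q1.1 : ℕ) ≤ N := Fin.is_le q1.1
    have hx2 : (q2.1 : ℕ) ≤ N := Fin.is_le q2.1
    have hy1 : (q1.2 : ℕ) ≤ N := Fin.is_le q1.2
    have hy2 : (q2.2 : ℕ) ≤ N := Fin.is_le q2.2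
    have hxb : x ^ 2 ≤ (N : ℤ) * N := by
      have : |x| ≤ (N : ℤ) := by rw [hx, abs_sub_le_iff]; constructor <;> push_cast <;> omega
      nlinarith [sq_abs x, abs_nonneg x]
    have hyb : y ^ 2 ≤ (N : ℤ) * N := by
      have : |y| ≤ (N : ℤ) := by rw [hy, abs_sub_le_iff]; constructor <;> push_cast <;> omega
      nlinarith [sq_abs y, abs_nonneg y]
    have : (N : ℤ) * N < p := by exact_mod_cast hN2
    linarith
  obtain ⟨k, hk⟩ := hdvd
  have hppos : (0 : ℤ) < p := by exact_mod_cast hp.pos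
  have hk3 : k = 1 ∨ k = 2 ∨ k = 3 := by
    have hk0 : 0 < k := by nlinarith
    have hk4 : k < 4 := by nlinarith
    omega
  rcases hk3 with rfl | rfl | rfl
  · exact ⟨x, y, by linarith [hk]⟩
  · -- k = 2 impossible mod 4
    exfalso
    have hmod : ∀ u v : ZMod 4, u ^ 2 + 3 * v ^ 2 ≠ 2 := by decide
    apply hmod (x : ZMod 4) (y : ZMod 4)
    have hcast4 : ((x ^ 2 + 3 * y ^ 2 : ℤ) : ZMod 4) = ((p * 2 : ℤ) : ZMod 4) := by rw [hk]
    push_cast at hcast4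
    rw [hcast4]
    obtain ⟨m, hm⟩ := hp.odd_of_ne_two (by omega)
    have h4 : ((4 : ZMod 4)) = 0 := by decide
    rw [hm]
    push_cast
    linear_combination (m : ZMod 4) * h4
  · -- k = 3: then 3 ∣ x
    have h3x : (3 : ℤ) ∣ x := by
      have h3sq : (3 : ℤ) ∣ x ^ 2 := ⟨p - y ^ 2, by linarith⟩
      exact (Int.Prime.dvd_pow' (by norm_num) h3sq)
    obtain ⟨z, hz⟩ := h3x
    refine ⟨y, z, ?_⟩
    have h9 : (3 * z) ^ 2 + 3 * y ^ 2 = (p : ℤ) * 3 := by rw [← hz]; exact hk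
    have h9' : (3 : ℤ) * (y ^ 2 + 3 * z ^ 2) = 3 * (p : ℤ) := by linear_combination h9
    exact (mul_left_cancel₀ (by norm_num : (3:ℤ) ≠ 0) h9').symm
end

section
/- If p is an odd prime with p ≠ 5 dividing a² + 5b² where a and b are coprime, then p mod 20 ∈ {1, 3, 7, 9}. -/
theorem euler_e164_thm10 (a b : ℤ) (hab : IsCoprime a b) (p : ℕ) (hp : p.Prime)
    (hp2 : p ≠ 2) (hp5 : p ≠ 5) (hdvd : (p : ℤ) ∣ a ^ 2 + 5 * b ^ 2) :
    p % 20 = 1 ∨ p % 20 = 3 ∨ p % 20 = 7 ∨ p % 20 = 9 := by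
  haveI : Fact p.Prime := ⟨hp⟩
  -- b is nonzero mod p
  have hb : (b : ZMod p) ≠ 0 := by
    intro h
    have hbz : (p : ℤ) ∣ b := by exact_mod_cast (ZMod.intCast_zmod_eq_zero_iff_dvd b p).mp h
    have hpint : Prime (p : ℤ) := Int.prime_iff_natAbs_prime.mpr (by simpa)
    have ha2 : (p : ℤ) ∣ a ^ 2 := by
      have h5b : (p : ℤ) ∣ 5 * b ^ 2 := Dvd.dvd.mul_left (hbz.pow (by norm_num)) 5
      have := dvd_sub hdvd h5b
      simpa using this
    have haz : (p : ℤ) ∣ a := hpint.dvd_of_dvd_pow ha2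
    have := hab.isUnit_of_dvd' haz hbz
    exact hpint.not_unit this
  have h0 : ((a : ZMod p)) ^ 2 + 5 * (b : ZMod p) ^ 2 = 0 := by
    have := (ZMod.intCast_zmod_eq_zero_iff_dvd _ p).mpr hdvd
    push_cast at this
    exact this
  have hsq : IsSquare (-5 : ZMod p) := by
    refine ⟨(a : ZMod p) * (b : ZMod p)⁻¹, ?_⟩
    field_simp
    linear_combination -h0
  have h5 : ((-5 : ℤ) : ZMod p) ≠ 0 := by
    intro h
    have : (p : ℤ) ∣ -5 := (ZMod.intCast_zmod_eq_zero_iff_dvd _ p).mp h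
    have : (p : ℤ) ∣ 5 := (dvd_neg).mp this
    have h5' : p ∣ 5 := by exact_mod_cast this
    exact hp5 ((Nat.prime_dvd_prime_iff_eq hp (by norm_num)).mp h5')
  have hL : legendreSym p (-5) = 1 := by
    rw [legendreSym.eq_one_iff p h5]
    convert hsq using 2
    push_cast
    ring
  have hmul : legendreSym p (-1) * legendreSym p 5 = 1 := by
    rw [← legendreSym.mul]
    norm_num at hL ⊢
    exact hL
  have h1 : ((-1 : ℤ) : ZMod p) ≠ 0 := by
    push_cast
    exact neg_ne_zero.mpr one_ne_zero
  have h5c : ((5 : ℤ) : ZMod p) ≠ 0 := by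
    intro h
    apply h5
    push_cast at h ⊢
    simp [h]
  -- legendreSym p (-1) via χ₄
  have hneg1 := legendreSym.at_neg_one (p := p) hp2
  -- quadratic reciprocity with 5
  haveI : Fact (Nat.Prime 5) := ⟨by norm_num⟩
  have hrec : legendreSym p 5 = legendreSym 5 p :=
    legendreSym.quadratic_reciprocity_one_mod_four (by norm_num) hp2
  have hmod5 : legendreSym 5 (p : ℤ) = legendreSym 5 ((p : ℤ) % 5) := legendreSym.mod 5 p
  have hp4 : p % 4 = 1 ∨ p % 4 = 3 := by
    have := hp.eq_one_or_self_of_dvd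
    have h2 : p % 2 = 1 := Nat.Prime.eq_two_or_odd hp |>.resolve_left hp2
    omega
  have hp5' : ¬ (5 ∣ p) := fun h => hp5 ((Nat.prime_dvd_prime_iff_eq (by norm_num) hp).mp h).symm
  have hm5 : p % 5 = 1 ∨ p % 5 = 2 ∨ p % 5 = 3 ∨ p % 5 = 4 := by omega
  have hcast : ((p : ℤ) % 5) = ((p % 5 : ℕ) : ℤ) := by push_cast; omega
  rcases hp4 with h4 | h4
  · have hx : legendreSym p (-1) = 1 := by rw [hneg1, ZMod.χ₄_nat_one_mod_four h4]
    have hy : legendreSym p 5 = 1 := by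
      have := hmul; rw [hx, one_mul] at this; exact this
    rw [hrec, hmod5, hcast] at hy
    rcases hm5 with h5m | h5m | h5m | h5m <;> rw [h5m] at hy <;> norm_num at hy <;> omega
  · have hx : legendreSym p (-1) = -1 := by rw [hneg1, ZMod.χ₄_nat_three_mod_four h4]
    have hy : legendreSym p 5 = -1 := by
      have := hmul; rw [hx] at this; linarith
    rw [hrec, hmod5, hcast] at hy
    rcases hm5 with h5m | h5m | h5m | h5m <;> rw [h5m] at hy <;> norm_num at hy <;> omega
end

section
/- If p is a prime with p ≡ 1 (mod 20) or p ≡ 9 (mod 20), then p = a² + 5b² for some integers a, b; if p ≡ 3 (mod 20) or p ≡ 7 (mod 20), then 2p = a² + 5b² for some integers a, b. -/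
-- x² + 5y² = q is impossible when q ≡ 3 (mod 4)
lemma elim3mod4 (q x y : ℤ) (hq : q % 4 = 3) (h : x ^ 2 + 5 * y ^ 2 = q) : False := by
  obtain ⟨a, ha⟩ := Int.even_or_odd' x
  obtain ⟨b, hb⟩ := Int.even_or_odd' y
  rcases ha with rfl | rfl <;> rcases hb with rfl | rfl
  · have h' : 4 * a ^ 2 + 20 * b ^ 2 = q := by linear_combination h
    generalize a ^ 2 = A at h'; generalize b ^ 2 = B at h'; omega
  · have h' : 4 * a ^ 2 + 20 * b ^ 2 + 20 * b + 5 = q := by linear_combination h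
    generalize a ^ 2 = A at h'; generalize b ^ 2 = B at h'; omega
  · have h' : 4 * a ^ 2 + 4 * a + 1 + 20 * b ^ 2 = q := by linear_combination h
    generalize a ^ 2 = A at h'; generalize b ^ 2 = B at h'; omega
  · have h' : 4 * (a ^ 2 + a) + 20 * (b ^ 2 + b) + 6 = q := by linear_combination h
    generalize a ^ 2 + a = A at h'; generalize b ^ 2 + b = B at h'; omega

-- x² + 5y² = 2p is impossible when p ≡ 1 (mod 4)
lemma elim2mod8 (p x y : ℤ) (hp4 : p % 4 = 1) (h : x ^ 2 + 5 * y ^ 2 = 2 * p) : False := by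
  obtain ⟨a, ha⟩ := Int.even_or_odd' x
  obtain ⟨b, hb⟩ := Int.even_or_odd' y
  rcases ha with rfl | rfl <;> rcases hb with rfl | rfl
  · have h' : 4 * a ^ 2 + 20 * b ^ 2 = 2 * p := by linear_combination h
    generalize a ^ 2 = A at h'; generalize b ^ 2 = B at h'; omega
  · have h' : 4 * a ^ 2 + 20 * b ^ 2 + 20 * b + 5 = 2 * p := by linear_combination h
    generalize a ^ 2 = A at h'; generalize b ^ 2 = B at h'; omega
  · have h' : 4 * a ^ 2 + 4 * a + 1 + 20 * b ^ 2 = 2 * p := by linear_combination h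
    generalize a ^ 2 = A at h'; generalize b ^ 2 = B at h'; omega
  · have h1 : (2 : ℤ) ∣ a * (a + 1) := (Int.even_mul_succ_self a).two_dvd
    have h2 : (2 : ℤ) ∣ b * (b + 1) := (Int.even_mul_succ_self b).two_dvd
    have h' : 4 * (a * (a + 1)) + 20 * (b * (b + 1)) + 6 = 2 * p := by linear_combination h
    generalize a * (a + 1) = A at h' h1; generalize b * (b + 1) = B at h' h2; omega

-- from x² + 5y² = 3p get a representation of 2p
lemma rep3to2 (p x y : ℤ) (h : x ^ 2 + 5 * y ^ 2 = 3 * p) :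
    ∃ a b : ℤ, 2 * p = a ^ 2 + 5 * b ^ 2 := by
  have hdvd : (3 : ℤ) ∣ (x - y) * (x + y) := ⟨p - 2 * y ^ 2, by linear_combination h⟩
  rcases Int.prime_three.dvd_mul.mp hdvd with ⟨c, hc⟩ | ⟨c, hc⟩
  · have hx : x = 3 * c + y := by linarith
    subst hx
    refine ⟨c + 2 * y, c, mul_left_cancel₀ (by norm_num : (3:ℤ) ≠ 0) ?_⟩
    linear_combination -2 * h
  · have hx : x = 3 * c - y := by linarith
    subst hx
    refine ⟨c - 2 * y, c, mul_left_cancel₀ (by norm_num : (3:ℤ) ≠ 0) ?_⟩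
    linear_combination -2 * h

-- from x² + 5y² = 4p (p odd) get a representation of p
lemma rep4to1 (p x y : ℤ) (hp2 : p % 2 = 1) (h : x ^ 2 + 5 * y ^ 2 = 4 * p) :
    ∃ a b : ℤ, p = a ^ 2 + 5 * b ^ 2 := by
  obtain ⟨a, ha⟩ := Int.even_or_odd' x
  obtain ⟨b, hb⟩ := Int.even_or_odd' y
  rcases ha with rfl | rfl <;> rcases hb with rfl | rfl
  · exact ⟨a, b, mul_left_cancel₀ (by norm_num : (4:ℤ) ≠ 0) (by linear_combination -h)⟩
  · exfalso
    have h' : 4 * a ^ 2 + 20 * b ^ 2 + 20 * b + 5 = 4 * p := by linear_combination h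
    generalize a ^ 2 = A at h'; generalize b ^ 2 = B at h'; omega
  · exfalso
    have h' : 4 * a ^ 2 + 4 * a + 1 + 20 * b ^ 2 = 4 * p := by linear_combination h
    generalize a ^ 2 = A at h'; generalize b ^ 2 = B at h'; omega
  · exfalso
    have h1 : (2 : ℤ) ∣ a * (a + 1) := (Int.even_mul_succ_self a).two_dvd
    have h2 : (2 : ℤ) ∣ b * (b + 1) := (Int.even_mul_succ_self b).two_dvd
    have h' : 4 * (a * (a + 1)) + 20 * (b * (b + 1)) + 6 = 4 * p := by linear_combination h
    generalize a * (a + 1) = A at h' h1; generalize b * (b + 1) = B at h' h2; omega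

-- from x² + 5y² = 5p get a representation of p
lemma rep5to1 (p x y : ℤ) (h : x ^ 2 + 5 * y ^ 2 = 5 * p) :
    ∃ a b : ℤ, p = a ^ 2 + 5 * b ^ 2 := by
  have h5 : Prime (5 : ℤ) := by norm_num
  have hdvd : (5 : ℤ) ∣ x ^ 2 := ⟨p - y ^ 2, by linear_combination h⟩
  obtain ⟨c, hc⟩ := h5.dvd_of_dvd_pow hdvd
  subst hc
  exact ⟨y, c, mul_left_cancel₀ (by norm_num : (5:ℤ) ≠ 0) (by linear_combination -h)⟩

lemma ns3 : ¬ IsSquare ((3 : ℤ) : ZMod 5) := by decide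
lemma ns2 : ¬ IsSquare ((2 : ℤ) : ZMod 5) := by decide
lemma nz2 : ((2 : ℤ) : ZMod 5) ≠ 0 := by decide

-- -5 is a square mod p
lemma isSq_neg_five (p : ℕ) (hp : p.Prime)
    (h20 : p % 20 = 1 ∨ p % 20 = 3 ∨ p % 20 = 7 ∨ p % 20 = 9) :
    IsSquare (-5 : ZMod p) := by
  haveI := Fact.mk hp
  haveI : Fact (Nat.Prime 5) := ⟨by norm_num⟩
  have hp2 : p ≠ 2 := by rintro rfl; omega
  have hn5 : ((-5 : ℤ) : ZMod p) ≠ 0 := by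
    rw [Ne, ZMod.intCast_zmod_eq_zero_iff_dvd, dvd_neg]
    intro hd
    have hd' : p ∣ 5 := by exact_mod_cast hd
    rcases (Nat.prime_five.eq_one_or_self_of_dvd p hd') with rfl | rfl
    · exact Nat.not_prime_one hp
    · omega
  have hm : legendreSym p (-5) = legendreSym p (-1) * legendreSym p 5 := by
    rw [← legendreSym.mul]; norm_num
  have h1 : legendreSym p (-1) = ZMod.χ₄ p := legendreSym.at_neg_one hp2
  have h2 : legendreSym p 5 = legendreSym 5 p :=
    legendreSym.quadratic_reciprocity_one_mod_four (by norm_num) hp2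
  have h3 : legendreSym 5 (p : ℤ) = legendreSym 5 ((p : ℤ) % 5) := legendreSym.mod 5 (p : ℤ)
  have key : legendreSym p (-5) = 1 := by
    rw [hm, h1, h2, h3]
    rcases h20 with h | h | h | h
    · rw [ZMod.χ₄_nat_one_mod_four (by omega), (by omega : (p : ℤ) % 5 = 1)]
      norm_num [legendreSym.at_one]
    · rw [ZMod.χ₄_nat_three_mod_four (by omega), (by omega : (p : ℤ) % 5 = 3)]
      rw [(legendreSym.eq_neg_one_iff 5).mpr ns3]
      norm_num
    · rw [ZMod.χ₄_nat_three_mod_four (by omega), (by omega : (p : ℤ) % 5 = 2)]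
      rw [(legendreSym.eq_neg_one_iff 5).mpr ns2]
      norm_num
    · rw [ZMod.χ₄_nat_one_mod_four (by omega), (by omega : (p : ℤ) % 5 = 4)]
      rw [(by norm_num : (4 : ℤ) = 2 ^ 2), legendreSym.sq_one' (p := 5) nz2]
      norm_num
  have := (legendreSym.eq_one_iff p hn5).mp key
  simpa using this

-- Thue-type lemma
lemma thue_aux (p : ℕ) (hp : p.Prime) (r : ZMod p) :
    ∃ x y : ℤ, (¬(x = 0 ∧ y = 0)) ∧ x ^ 2 < p ∧ y ^ 2 < p ∧ (x : ZMod p) = r * (y : ZMod p) := by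
  haveI := Fact.mk hp
  obtain ⟨n, hn⟩ : ∃ n, n = Nat.sqrt p := ⟨_, rfl⟩
  have hnle : n * n ≤ p := hn ▸ Nat.sqrt_le p
  have hnlt : n * n < p := by
    rcases lt_or_eq_of_le hnle with h | h
    · exact h
    · exfalso
      rcases hp.eq_one_or_self_of_dvd n ⟨n, h.symm⟩ with rfl | rfl
      · have := hp.two_le; omega
      · have := hp.two_le; nlinarith
  have hcard : Fintype.card (ZMod p) < Fintype.card (Fin (n + 1) × Fin (n + 1)) := by
    rw [ZMod.card, Fintype.card_prod, Fintype.card_fin]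
    have h := Nat.lt_succ_sqrt p
    rw [← hn, Nat.succ_eq_add_one] at h
    exact h
  obtain ⟨a, b, hab, hfab⟩ := Fintype.exists_ne_map_eq_of_card_lt
    (fun v : Fin (n + 1) × Fin (n + 1) =>
      ((v.1 : ℕ) : ZMod p) - r * ((v.2 : ℕ) : ZMod p)) hcard
  refine ⟨((a.1 : ℕ) : ℤ) - ((b.1 : ℕ) : ℤ), ((a.2 : ℕ) : ℤ) - ((b.2 : ℕ) : ℤ), ?_, ?_, ?_, ?_⟩
  · rintro ⟨h1, h2⟩
    apply hab
    have e1 : (a.1 : ℕ) = (b.1 : ℕ) := by omega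
    have e2 : (a.2 : ℕ) = (b.2 : ℕ) := by omega
    exact Prod.ext (Fin.ext e1) (Fin.ext e2)
  · have ha1 : ((a.1 : ℕ) : ℤ) ≤ n := by exact_mod_cast Nat.le_of_lt_succ a.1.isLt
    have hb1 : ((b.1 : ℕ) : ℤ) ≤ n := by exact_mod_cast Nat.le_of_lt_succ b.1.isLt
    have ha0 : (0 : ℤ) ≤ (a.1 : ℕ) := Int.natCast_nonneg _
    have hb0 : (0 : ℤ) ≤ (b.1 : ℕ) := Int.natCast_nonneg _
    have h2 : (n : ℤ) * n < p := by exact_mod_cast hnlt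
    nlinarith
  · have ha1 : ((a.2 : ℕ) : ℤ) ≤ n := by exact_mod_cast Nat.le_of_lt_succ a.2.isLt
    have hb1 : ((b.2 : ℕ) : ℤ) ≤ n := by exact_mod_cast Nat.le_of_lt_succ b.2.isLt
    have ha0 : (0 : ℤ) ≤ (a.2 : ℕ) := Int.natCast_nonneg _
    have hb0 : (0 : ℤ) ≤ (b.2 : ℕ) := Int.natCast_nonneg _
    have h2 : (n : ℤ) * n < p := by exact_mod_cast hnlt
    nlinarith
  · push_cast
    linear_combination hfab

theorem euler_e164_thm11 (p : ℕ) (hp : p.Prime) :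
    ((p % 20 = 1 ∨ p % 20 = 9) → ∃ a b : ℤ, (p : ℤ) = a ^ 2 + 5 * b ^ 2) ∧
    ((p % 20 = 3 ∨ p % 20 = 7) → ∃ a b : ℤ, 2 * (p : ℤ) = a ^ 2 + 5 * b ^ 2) := by
  haveI := Fact.mk hp
  have main : ∀ h20 : p % 20 = 1 ∨ p % 20 = 3 ∨ p % 20 = 7 ∨ p % 20 = 9,
      (p % 4 = 1 → ∃ a b : ℤ, (p : ℤ) = a ^ 2 + 5 * b ^ 2) ∧
      (p % 4 = 3 → ∃ a b : ℤ, 2 * (p : ℤ) = a ^ 2 + 5 * b ^ 2) := by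
    intro h20
    obtain ⟨r, hr⟩ := isSq_neg_five p hp h20
    obtain ⟨x, y, hne, hx, hy, hxy⟩ := thue_aux p hp r
    have hdvd : (p : ℤ) ∣ x ^ 2 + 5 * y ^ 2 := by
      rw [← ZMod.intCast_zmod_eq_zero_iff_dvd]
      push_cast
      linear_combination ((x : ZMod p) + r * (y : ZMod p)) * hxy - ((y : ZMod p)) ^ 2 * hr
    obtain ⟨k, hk⟩ := hdvd
    have hp0 : (0 : ℤ) < p := by exact_mod_cast hp.pos
    have hpos : 0 < x ^ 2 + 5 * y ^ 2 := by
      rcases lt_or_eq_of_le (by positivity : (0:ℤ) ≤ x ^ 2 + 5 * y ^ 2) with h | h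
      · exact h
      · exfalso; exact hne ⟨by nlinarith, by nlinarith⟩
    have hlt : x ^ 2 + 5 * y ^ 2 < 6 * p := by linarith
    have hk1 : 1 ≤ k := by nlinarith
    have hk5 : k ≤ 5 := by nlinarith
    constructor
    · intro h4
      interval_cases k
      · exact ⟨x, y, by linarith⟩
      · exact absurd (by linarith : x ^ 2 + 5 * y ^ 2 = 2 * p) (fun h => elim2mod8 p x y (by omega) h)
      · exact absurd hk (fun h => elim3mod4 ((p:ℤ) * 3) x y (by omega) (by linarith))
      · exact rep4to1 p x y (by omega) (by linarith)
      · exact rep5to1 p x y (by linarith)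
    · intro h4
      interval_cases k
      · exact absurd hk (fun h => elim3mod4 (p : ℤ) x y (by omega) (by linarith))
      · exact ⟨x, y, by linarith⟩
      · exact rep3to2 p x y (by linarith)
      · obtain ⟨a, b, hab⟩ := rep4to1 p x y (by omega) (by linarith)
        exact absurd hab (fun h => elim3mod4 (p : ℤ) a b (by omega) h.symm)
      · obtain ⟨a, b, hab⟩ := rep5to1 p x y (by linarith)
        exact absurd hab (fun h => elim3mod4 (p : ℤ) a b (by omega) h.symm)
  constructor
  · intro h
    exact (main (by omega)).1 (by omega)
  · intro h
    exact (main (by omega)).2 (by omega)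
end

section
/- Every odd prime p with p mod 14 ∈ {1, 9, 11} can be written as p = a² + 7b² for some integers a, b. -/
theorem descent7 (p : ℕ) (pp : p.Prime) (hodd : p % 2 = 1)
    (IH : ∀ q : ℕ, q < p → q.Prime → q % 2 = 1 → q ≠ 7 → IsSquare (-7 : ZMod q) →
      ∃ u v : ℤ, (q : ℤ) = u ^ 2 + 7 * v ^ 2) :
    ∀ k : ℕ, 0 < k → k < p → ∀ x y : ℤ, x ^ 2 + 7 * y ^ 2 = (k : ℤ) * p →
      ∃ a b : ℤ, (p : ℤ) = a ^ 2 + 7 * b ^ 2 := by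
  intro k
  induction k using Nat.strong_induction_on with
  | _ k ih =>
  intro hk0 hkp x y hxy
  rcases eq_or_ne k 1 with rfl | hk1
  · exact ⟨x, y, by push_cast at hxy; linear_combination -hxy⟩
  rcases Nat.even_or_odd k with hke | hko
  · -- k even
    obtain ⟨k2, hk2eq⟩ := hke
    have hk2z : (k : ℤ) = 2 * (k2 : ℤ) := by push_cast [hk2eq]; ring
    have hk2pos : 0 < k2 := by omega
    -- 2 ∣ x - y
    have hprod : (x - y) * (x + y) = 2 * ((k2 : ℤ) * p - 4 * y ^ 2) := by
      linear_combination hxy + (p : ℤ) * hk2z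
    have h2 : (2 : ℤ) ∣ x - y := by
      rcases (Int.prime_two.dvd_mul).mp ⟨(k2 : ℤ) * p - 4 * y ^ 2, hprod⟩ with h | h
      · exact h
      · obtain ⟨c, hc⟩ := h
        exact ⟨c - y, by omega⟩
    obtain ⟨w, hw0⟩ := h2
    have hw : x = y + 2 * w := by omega
    subst hw
    rcases Int.even_or_odd y with ⟨n, hn⟩ | ⟨n, hn⟩
    · -- x, y both even
      subst hn
      have h4 : (4 : ℕ) ∣ k * p := by
        have h4z : ((4 : ℕ) : ℤ) ∣ ((k * p : ℕ) : ℤ) :=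
          ⟨(n + w) ^ 2 + 7 * n ^ 2, by push_cast; linear_combination -hxy⟩
        exact_mod_cast h4z
      have hc2 : Nat.Coprime 2 p := (Nat.coprime_primes Nat.prime_two pp).mpr (by omega)
      have hc4 : Nat.Coprime 4 p := by
        have := Nat.Coprime.pow_left 2 hc2
        norm_num at this
        exact this
      obtain ⟨k', hk4⟩ := hc4.dvd_of_dvd_mul_right h4
      have hk4z : (k : ℤ) = 4 * (k' : ℤ) := by push_cast [hk4]; ring
      have heq : (n + w) ^ 2 + 7 * n ^ 2 = (k' : ℤ) * p := by
        have h4e : (4 : ℤ) * ((n + w) ^ 2 + 7 * n ^ 2) = 4 * ((k' : ℤ) * p) := by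
          linear_combination hxy + (p : ℤ) * hk4z
        exact mul_left_cancel₀ (by norm_num) h4e
      exact ih k' (by omega) (by omega) (by omega) _ _ heq
    · -- x, y both odd
      subst hn
      rcases Int.even_or_odd w with ⟨s, hs⟩ | ⟨t, ht⟩
      · subst hs
        have heq : (2 * (2 * n + 1) + s) ^ 2 + 7 * s ^ 2 = (k2 : ℤ) * p := by
          have h2e : (2 : ℤ) * ((2 * (2 * n + 1) + s) ^ 2 + 7 * s ^ 2) = 2 * ((k2 : ℤ) * p) := by
            linear_combination hxy + (p : ℤ) * hk2z
          exact mul_left_cancel₀ (by norm_num) h2e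
        exact ih k2 (by omega) (by omega) (by omega) _ _ heq
      · subst ht
        have heq : ((n + t + 1) - 2 * (2 * n + 1)) ^ 2 + 7 * (n + t + 1) ^ 2 = (k2 : ℤ) * p := by
          have h2e : (2 : ℤ) * (((n + t + 1) - 2 * (2 * n + 1)) ^ 2 + 7 * (n + t + 1) ^ 2)
              = 2 * ((k2 : ℤ) * p) := by
            linear_combination hxy + (p : ℤ) * hk2z
          exact mul_left_cancel₀ (by norm_num) h2e
        exact ih k2 (by omega) (by omega) (by omega) _ _ heq
  · -- k odd, k ≥ 2, with q = minFac k
    have hqp : (k.minFac).Prime := Nat.minFac_prime (by omega)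
    set q := k.minFac with hqdef
    have hqk : q ∣ k := Nat.minFac_dvd k
    have hqle : q ≤ k := Nat.minFac_le (by omega)
    have hq2le : 2 ≤ q := hqp.two_le
    have hqodd : q % 2 = 1 := by
      rcases hqp.eq_two_or_odd with h | h
      · exfalso; rw [h] at hqk; obtain ⟨c, hc⟩ := hqk; obtain ⟨m, hm⟩ := hko; omega
      · exact h
    have hq3 : 3 ≤ q := by omega
    obtain ⟨k', hk'⟩ := hqk
    have hk'pos : 0 < k' := by
      rcases Nat.eq_zero_or_pos k' with h | h
      · subst h; simp at hk'; omega
      · exact h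
    have hk'lt : k' < k := by nlinarith [hk', hq3, hk'pos]
    have hkz : (k : ℤ) = (q : ℤ) * (k' : ℤ) := by push_cast [hk']; ring
    have hqzd : (q : ℤ) ∣ x ^ 2 + 7 * y ^ 2 :=
      ⟨(k' : ℤ) * p, by rw [hxy, hkz]; ring⟩
    have hqprime : Prime (q : ℤ) := Nat.prime_iff_prime_int.mp hqp
    rcases eq_or_ne q 7 with hq7 | hq7
    · -- q = 7
      have h7x : (7 : ℤ) ∣ x := by
        have h7sq : (7 : ℤ) ∣ x ^ 2 := by
          refine ⟨(k' : ℤ) * p - y ^ 2, ?_⟩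
          rw [hq7] at hkz
          linear_combination hxy + (p : ℤ) * hkz
        exact (by norm_num : Prime (7 : ℤ)).dvd_of_dvd_pow h7sq
      obtain ⟨x1, hx1⟩ := h7x
      subst hx1
      have heq : y ^ 2 + 7 * x1 ^ 2 = (k' : ℤ) * p := by
        have h7e : (7 : ℤ) * (y ^ 2 + 7 * x1 ^ 2) = 7 * ((k' : ℤ) * p) := by
          rw [hq7] at hkz
          linear_combination hxy + (p : ℤ) * hkz
        exact mul_left_cancel₀ (by norm_num) h7e
      exact ih k' hk'lt (by omega) (by omega) _ _ heq
    · by_cases hqy : (q : ℤ) ∣ y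
      · -- q divides both x and y
        obtain ⟨c, hc⟩ := hqy
        have hqx : (q : ℤ) ∣ x := by
          have hsq : (q : ℤ) ∣ x ^ 2 :=
            ⟨(k' : ℤ) * p - 7 * (q : ℤ) * c ^ 2,
              by linear_combination hxy + (p : ℤ) * hkz - 7 * (y + (q : ℤ) * c) * hc⟩
          exact hqprime.dvd_of_dvd_pow hsq
        obtain ⟨x1, hx1⟩ := hqx
        subst hx1; subst hc
        have hq2d : q ^ 2 ∣ k * p := by
          have hz : ((q ^ 2 : ℕ) : ℤ) ∣ ((k * p : ℕ) : ℤ) :=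
            ⟨x1 ^ 2 + 7 * c ^ 2, by push_cast; linear_combination -hxy⟩
          exact_mod_cast hz
        have hcop : Nat.Coprime (q ^ 2) p :=
          Nat.Coprime.pow_left 2 ((Nat.coprime_primes hqp pp).mpr (by omega))
        obtain ⟨k2, hk2'⟩ := hcop.dvd_of_dvd_mul_right hq2d
        have hk2z : (k : ℤ) = (q : ℤ) ^ 2 * (k2 : ℤ) := by push_cast [hk2']; ring
        have hk2pos : 0 < k2 := by
          rcases Nat.eq_zero_or_pos k2 with h | h
          · subst h; simp at hk2'; omega
          · exact h
        have hq9 : 9 ≤ q ^ 2 := by nlinarith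
        have hk2lt : k2 < k := by nlinarith [hk2', hq9, hk2pos]
        have heq : x1 ^ 2 + 7 * c ^ 2 = (k2 : ℤ) * p := by
          have he : (q : ℤ) ^ 2 * (x1 ^ 2 + 7 * c ^ 2) = (q : ℤ) ^ 2 * ((k2 : ℤ) * p) := by
            linear_combination hxy + (p : ℤ) * hk2z
          exact mul_left_cancel₀ (pow_ne_zero 2 (by exact_mod_cast hqp.ne_zero)) he
        exact ih k2 hk2lt (by omega) (by omega) _ _ heq
      · -- the composition case
        haveI : Fact q.Prime := ⟨hqp⟩
        have hsq : IsSquare (-7 : ZMod q) := by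
          have e0 : ((x : ZMod q)) ^ 2 + 7 * ((y : ZMod q)) ^ 2 = 0 := by
            have := (ZMod.intCast_zmod_eq_zero_iff_dvd (x ^ 2 + 7 * y ^ 2) q).mpr hqzd
            push_cast at this
            exact this
          have hy0 : ((y : ZMod q)) ≠ 0 := fun h => hqy ((ZMod.intCast_zmod_eq_zero_iff_dvd y q).mp h)
          refine ⟨(x : ZMod q) * ((y : ZMod q))⁻¹, ?_⟩
          have h1 : (y : ZMod q) * ((y : ZMod q))⁻¹ = 1 := mul_inv_cancel₀ hy0
          field_simp
          linear_combination -e0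
        obtain ⟨u, v, huv⟩ := IH q (by omega) hqp hqodd hq7 hsq
        have hdvdprod : (q : ℤ) ∣ (x * v - y * u) * (x * v + y * u) := by
          have e : (x * v - y * u) * (x * v + y * u) = v ^ 2 * (x ^ 2 + 7 * y ^ 2) - y ^ 2 * (q : ℤ) := by
            rw [huv]; ring
          rw [e]
          exact dvd_sub (hqzd.mul_left _) (dvd_mul_left _ _)
        rcases (hqprime.dvd_mul).mp hdvdprod with hc | hc
        · obtain ⟨s, hs⟩ := hc
          have hd2 : (q : ℤ) ∣ x * u + 7 * y * v := by
            have hsq2 : (q : ℤ) ∣ (x * u + 7 * y * v) ^ 2 := by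
              have e : (x * u + 7 * y * v) ^ 2
                  = (x ^ 2 + 7 * y ^ 2) * (u ^ 2 + 7 * v ^ 2) - 7 * (x * v - y * u) ^ 2 := by ring
              rw [e, hs]
              exact dvd_sub (hqzd.mul_right _) ⟨7 * (q : ℤ) * s ^ 2, by ring⟩
            exact hqprime.dvd_of_dvd_pow hsq2
          obtain ⟨t, ht⟩ := hd2
          have heq : t ^ 2 + 7 * s ^ 2 = (k' : ℤ) * p := by
            have e1 : (x * u + 7 * y * v) ^ 2 + 7 * (x * v - y * u) ^ 2
                = (x ^ 2 + 7 * y ^ 2) * (u ^ 2 + 7 * v ^ 2) := by ring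
            rw [ht, hs, hxy, ← huv, hkz] at e1
            have e : (q : ℤ) ^ 2 * (t ^ 2 + 7 * s ^ 2) = (q : ℤ) ^ 2 * ((k' : ℤ) * p) := by
              linear_combination e1
            exact mul_left_cancel₀ (pow_ne_zero 2 (by exact_mod_cast hqp.ne_zero)) e
          exact ih k' hk'lt (by omega) (by omega) _ _ heq
        · obtain ⟨s, hs⟩ := hc
          have hd2 : (q : ℤ) ∣ x * u - 7 * y * v := by
            have hsq2 : (q : ℤ) ∣ (x * u - 7 * y * v) ^ 2 := by
              have e : (x * u - 7 * y * v) ^ 2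
                  = (x ^ 2 + 7 * y ^ 2) * (u ^ 2 + 7 * v ^ 2) - 7 * (x * v + y * u) ^ 2 := by ring
              rw [e, hs]
              exact dvd_sub (hqzd.mul_right _) ⟨7 * (q : ℤ) * s ^ 2, by ring⟩
            exact hqprime.dvd_of_dvd_pow hsq2
          obtain ⟨t, ht⟩ := hd2
          have heq : t ^ 2 + 7 * s ^ 2 = (k' : ℤ) * p := by
            have e1 : (x * u - 7 * y * v) ^ 2 + 7 * (x * v + y * u) ^ 2
                = (x ^ 2 + 7 * y ^ 2) * (u ^ 2 + 7 * v ^ 2) := by ring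
            rw [ht, hs, hxy, ← huv, hkz] at e1
            have e : (q : ℤ) ^ 2 * (t ^ 2 + 7 * s ^ 2) = (q : ℤ) ^ 2 * ((k' : ℤ) * p) := by
              linear_combination e1
            exact mul_left_cancel₀ (pow_ne_zero 2 (by exact_mod_cast hqp.ne_zero)) e
          exact ih k' hk'lt (by omega) (by omega) _ _ heq

theorem rep7 : ∀ p : ℕ, p.Prime → p % 2 = 1 → p ≠ 7 → IsSquare (-7 : ZMod p) →
    ∃ a b : ℤ, (p : ℤ) = a ^ 2 + 7 * b ^ 2 := by
  intro p
  induction p using Nat.strong_induction_on with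
  | _ p IH =>
  intro pp hodd hp7 hsq
  haveI : Fact p.Prime := ⟨pp⟩
  obtain ⟨r, hr⟩ := hsq
  have hp3 : 3 ≤ p := by
    rcases pp.eq_two_or_odd with h | _
    · omega
    · have := pp.two_le; rcases Nat.eq_or_lt_of_le this with h | h
      · omega
      · omega
  set a : ℤ := r.valMinAbs with ha
  have hcast : ((a : ℤ) : ZMod p) = r := r.coe_valMinAbs
  have habs : a.natAbs ≤ p / 2 := ZMod.natAbs_valMinAbs_le r
  have hdvd : (p : ℤ) ∣ a ^ 2 + 7 := by
    rw [← ZMod.intCast_zmod_eq_zero_iff_dvd]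
    push_cast
    rw [hcast]
    linear_combination -hr
  obtain ⟨m, hm⟩ := hdvd
  have hmpos : 0 < m := by
    rcases lt_trichotomy m 0 with h | h | h
    · nlinarith [sq_nonneg a, (by exact_mod_cast pp.pos : (0:ℤ) < p)]
    · subst h; simp at hm; nlinarith [sq_nonneg a]
    · exact h
  have hnp : 2 * a.natAbs + 1 ≤ p := by omega
  have hnpz : 2 * (a.natAbs : ℤ) + 1 ≤ (p : ℤ) := by exact_mod_cast hnp
  have hp3z : (3 : ℤ) ≤ (p : ℤ) := by exact_mod_cast hp3
  have hasq : a ^ 2 = ((a.natAbs : ℤ)) ^ 2 := (sq_abs a).symm.trans (by rw [Int.abs_eq_natAbs])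
  have hmlt : m < (p : ℤ) := by
    have h1 : (p : ℤ) * m < (p : ℤ) * (p : ℤ) := by
      rw [← hm]
      nlinarith [hnpz, hp3z]
    exact lt_of_mul_lt_mul_left h1 (by positivity)
  set k : ℕ := m.toNat with hk
  have hkm : (k : ℤ) = m := Int.toNat_of_nonneg hmpos.le
  have heq : a ^ 2 + 7 * (1 : ℤ) ^ 2 = (k : ℤ) * p := by
    rw [hkm]
    linear_combination hm
  exact descent7 p pp hodd IH k (by omega) (by exact_mod_cast hkm ▸ hmlt) a 1 heq


theorem euler_e164_thm14 (p : ℕ) (hp : p.Prime) (hp7 : p ≠ 7)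
    (h : p % 14 = 1 ∨ p % 14 = 9 ∨ p % 14 = 11) :
    ∃ a b : ℤ, (p : ℤ) = a ^ 2 + 7 * b ^ 2 := by
  have hodd : p % 2 = 1 := by omega
  have hp2 : p ≠ 2 := by omega
  have h7 : p % 7 = 1 ∨ p % 7 = 2 ∨ p % 7 = 4 := by omega
  haveI : Fact p.Prime := ⟨hp⟩
  haveI : Fact (Nat.Prime 7) := ⟨by norm_num⟩
  have hsq : IsSquare (-7 : ZMod p) := by
    have hne : ((-7 : ℤ) : ZMod p) ≠ 0 := by
      rw [Int.cast_neg, neg_ne_zero]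
      intro h0
      have h7d : (p : ℤ) ∣ 7 := by
        have := (ZMod.intCast_zmod_eq_zero_iff_dvd 7 p).mp (by exact_mod_cast h0)
        exact_mod_cast this
      have : p ∣ 7 := by exact_mod_cast h7d
      exact hp7 ((Nat.prime_dvd_prime_iff_eq hp (by norm_num)).mp this)
    have h7p : legendreSym 7 p = 1 := by
      have hne0 : ((p : ℕ) : ZMod 7) ≠ 0 := by
        intro h0
        have : (7 : ℕ) ∣ p := (ZMod.natCast_eq_zero_iff p 7).mp h0
        rcases h7 with h'|h'|h' <;> omega
      rw [legendreSym.eq_one_iff' 7 hne0]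
      have hcast : ((p : ℕ) : ZMod 7) = ((p % 7 : ℕ) : ZMod 7) := (ZMod.natCast_mod p 7).symm
      rw [hcast]
      rcases h7 with h'|h'|h' <;> rw [h']
      · refine ⟨(1 : ZMod 7), ?_⟩; rfl
      · refine ⟨(3 : ZMod 7), ?_⟩; rfl
      · refine ⟨(2 : ZMod 7), ?_⟩; rfl
    have h1 : legendreSym p (-7) = 1 := by
      have hmul : legendreSym p (-7) = legendreSym p (-1) * legendreSym p 7 := by
        rw [show (-7 : ℤ) = -1 * 7 by ring, legendreSym.mul]
      have hqr : legendreSym p 7 = (-1 : ℤ) ^ (7 / 2 * (p / 2)) * legendreSym 7 p :=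
        legendreSym.quadratic_reciprocity' (by norm_num) hp2
      have hneg : legendreSym p (-1) = (-1 : ℤ) ^ (p / 2) :=
        by rw [legendreSym.at_neg_one hp2, ZMod.χ₄_eq_neg_one_pow hodd]
      rw [hmul, hqr, hneg, h7p, mul_one, show (7/2 : ℕ) = 3 from rfl, ← pow_add]
      have he : p / 2 + 3 * (p / 2) = 2 * (2 * (p / 2)) := by ring
      rw [he, pow_mul]
      norm_num
    exact (legendreSym.eq_one_iff p hne).mp h1 |>.imp fun r hr => by push_cast at hr ⊢; exact hr
  exact rep7 p hp hodd hp7 hsq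
end

section
/- If p is a prime dividing a² + 6b² where a and b are coprime, then p ∈ {2, 3} or p mod 24 ∈ {1, 5, 7, 11}. -/
theorem euler_e164_thm28 (a b : ℤ) (hab : IsCoprime a b) (p : ℕ) (hp : p.Prime)
    (hdvd : (p : ℤ) ∣ a ^ 2 + 6 * b ^ 2) :
    p = 2 ∨ p = 3 ∨ p % 24 = 1 ∨ p % 24 = 5 ∨ p % 24 = 7 ∨ p % 24 = 11 := by
  by_cases hp2 : p = 2; · exact Or.inl hp2
  by_cases hp3 : p = 3; · exact Or.inr (Or.inl hp3)
  right; right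
  haveI := Fact.mk hp
  have hpI : Prime (p : ℤ) := Nat.prime_iff_prime_int.mp hp
  have hb : ¬ ((p : ℤ) ∣ b) := by
    intro hbd
    have h6 : (p : ℤ) ∣ 6 * b ^ 2 := Dvd.dvd.mul_left (dvd_pow hbd two_ne_zero) 6
    have ha2 : (p : ℤ) ∣ a ^ 2 := by
      have := dvd_sub hdvd h6
      simpa using this
    have ha : (p : ℤ) ∣ a := hpI.dvd_of_dvd_pow ha2
    have h2le := hp.two_le
    rcases Int.isUnit_iff.mp (hab.isUnit_of_dvd' ha hbd) with h | h <;> omega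
  have hbz : (b : ZMod p) ≠ 0 := by
    rwa [Ne, ZMod.intCast_zmod_eq_zero_iff_dvd]
  have h0 : ((a : ZMod p)) ^ 2 + 6 * (b : ZMod p) ^ 2 = 0 := by
    have := (ZMod.intCast_zmod_eq_zero_iff_dvd _ p).mpr hdvd
    push_cast at this
    linear_combination this
  have hsq : IsSquare (-6 : ZMod p) := by
    refine ⟨(a : ZMod p) * (b : ZMod p)⁻¹, ?_⟩
    field_simp
    linear_combination -h0
  have h6ne : ((-6 : ℤ) : ZMod p) ≠ 0 := by
    rw [Ne, ZMod.intCast_zmod_eq_zero_iff_dvd]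
    intro h
    have h6' : (p : ℤ) ∣ 6 := dvd_neg.mp h
    have h6n : p ∣ 6 := by exact_mod_cast h6'
    have := Nat.le_of_dvd (by norm_num) h6n
    have := hp.two_le
    interval_cases p <;> first | omega | exact absurd hp (by norm_num)
  have hleg : legendreSym p (-6) = 1 :=
    (legendreSym.eq_one_iff p h6ne).mpr (by exact_mod_cast hsq)
  have hodd : Odd p := hp.odd_of_ne_two hp2
  have hj : jacobiSym (-6) (p % 24) = 1 := by
    have hm := jacobiSym.mod_right (-6) hodd (b := p)
    norm_num at hm
    rw [← hm, ← jacobiSym.legendreSym.to_jacobiSym p (-6)]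
    exact hleg
  have h2 : p % 2 = 1 := Nat.odd_iff.mp hodd
  have h3 : p % 3 ≠ 0 := by
    intro h
    exact hp3 ((Nat.prime_dvd_prime_iff_eq (by norm_num) hp).mp (Nat.dvd_of_mod_eq_zero h)).symm
  rcases (show p % 24 = 1 ∨ p % 24 = 5 ∨ p % 24 = 7 ∨ p % 24 = 11 ∨ p % 24 = 13 ∨
      p % 24 = 17 ∨ p % 24 = 19 ∨ p % 24 = 23 by omega) with h|h|h|h|h|h|h|h <;>
    rw [h] at hj ⊢ <;> first | tauto | norm_num at hj
end

section
/- Every prime p with p ≡ 1 (mod 24) or p ≡ 7 (mod 24) can be written as p = a² + 6b², and every prime p with p ≡ 5 (mod 24) or p ≡ 11 (mod 24) can be written as p = 2a² + 3b², for some integers a, b. -/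
/-- Thue's lemma -/
lemma euler_thue (p : ℕ) (hp : p.Prime) (c : ZMod p) :
    ∃ a b : ℤ, ((a : ZMod p) = c * (b : ZMod p)) ∧ a ^ 2 ≤ (Nat.sqrt p : ℤ) ^ 2 ∧
      b ^ 2 ≤ (Nat.sqrt p : ℤ) ^ 2 ∧ (a ≠ 0 ∨ b ≠ 0) := by
  haveI := Fact.mk hp
  set n := Nat.sqrt p with hn
  have hcard : Fintype.card (ZMod p) < Fintype.card (Fin (n + 1) × Fin (n + 1)) := by
    rw [ZMod.card, Fintype.card_prod, Fintype.card_fin]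
    have := Nat.lt_succ_sqrt p
    simpa [hn] using this
  obtain ⟨⟨x₁, y₁⟩, ⟨x₂, y₂⟩, hne, hfe⟩ :=
    Fintype.exists_ne_map_eq_of_card_lt
      (fun z : Fin (n + 1) × Fin (n + 1) => ((z.1 : ℕ) : ZMod p) - c * ((z.2 : ℕ) : ZMod p)) hcard
  simp only at hfe
  refine ⟨(x₁ : ℕ) - (x₂ : ℕ), (y₁ : ℕ) - (y₂ : ℕ), ?_, ?_, ?_, ?_⟩
  · push_cast
    linear_combination hfe
  · have h1 : (x₁ : ℕ) ≤ n := Nat.lt_succ_iff.mp x₁.isLt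
    have h2 : (x₂ : ℕ) ≤ n := Nat.lt_succ_iff.mp x₂.isLt
    have := sq_le_sq' (a := ((x₁:ℕ):ℤ) - ((x₂:ℕ):ℤ)) (b := (n:ℤ)) (by omega) (by omega)
    exact_mod_cast this
  · have h1 : (y₁ : ℕ) ≤ n := Nat.lt_succ_iff.mp y₁.isLt
    have h2 : (y₂ : ℕ) ≤ n := Nat.lt_succ_iff.mp y₂.isLt
    have := sq_le_sq' (a := ((y₁:ℕ):ℤ) - ((y₂:ℕ):ℤ)) (b := (n:ℤ)) (by omega) (by omega)
    exact_mod_cast this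
  · by_contra h
    push_neg at h
    obtain ⟨h1, h2⟩ := h
    apply hne
    have e1 : (x₁ : ℕ) = (x₂ : ℕ) := by omega
    have e2 : (y₁ : ℕ) = (y₂ : ℕ) := by omega
    exact Prod.ext (Fin.ext e1) (Fin.ext e2)

lemma euler_rep (p : ℕ) (hp : p.Prime)
    (h24 : p % 24 = 1 ∨ p % 24 = 5 ∨ p % 24 = 7 ∨ p % 24 = 11) :
    (∃ a b : ℤ, (p : ℤ) = a ^ 2 + 6 * b ^ 2) ∨ (∃ a b : ℤ, (p : ℤ) = 2 * a ^ 2 + 3 * b ^ 2) := by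
  haveI := Fact.mk hp
  have hodd : Odd p := by
    rcases h24 with h | h | h | h <;> · exact Nat.odd_iff.mpr (by omega)
  have hJ : jacobiSym (-6) p = 1 := by
    rw [jacobiSym.mod_right (-6) hodd]
    norm_num
    rcases h24 with h | h | h | h <;> rw [h] <;> norm_num
  have hsq : IsSquare ((-6 : ℤ) : ZMod p) := ZMod.isSquare_of_jacobiSym_eq_one hJ
  obtain ⟨c, hc⟩ := hsq
  push_cast at hc
  obtain ⟨a, b, hab, ha2, hb2, hne0⟩ := euler_thue p hp c
  -- p ∣ a² + 6 b²
  have hdvd : (p : ℤ) ∣ a ^ 2 + 6 * b ^ 2 := by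
    have : ((a ^ 2 + 6 * b ^ 2 : ℤ) : ZMod p) = 0 := by
      push_cast
      rw [hab]
      linear_combination (-((b : ZMod p) ^ 2)) * hc
    exact_mod_cast (ZMod.intCast_zmod_eq_zero_iff_dvd _ _).mp this
  obtain ⟨k, hk⟩ := hdvd
  have hppos : (0 : ℤ) < p := by exact_mod_cast hp.pos
  have hposk : 0 < k := by
    have hpos : 0 < a ^ 2 + 6 * b ^ 2 := by
      rcases hne0 with h | h
      · have : 0 < a ^ 2 := by positivity
        nlinarith [sq_nonneg b]
      · have : 0 < b ^ 2 := by positivity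
        nlinarith [sq_nonneg a]
    nlinarith
  have hsqlt : (Nat.sqrt p : ℤ) ^ 2 < (p : ℤ) := by
    have hle : Nat.sqrt p ^ 2 ≤ p := Nat.sqrt_le' p
    have hne : Nat.sqrt p ^ 2 ≠ p := by
      intro h
      have h' : p = Nat.sqrt p * Nat.sqrt p := h.symm.trans (pow_two (Nat.sqrt p))
      rcases hp.eq_one_or_self_of_dvd (Nat.sqrt p) ⟨Nat.sqrt p, h'⟩ with h1 | h1
      · rw [h1] at h'; have := hp.one_lt; omega
      · rw [h1] at h'
        nlinarith [hp.one_lt]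
    exact_mod_cast lt_of_le_of_ne hle hne
  have hk6 : k ≤ 6 := by nlinarith
  interval_cases k
  · exact Or.inl ⟨a, b, by linarith⟩
  · -- k = 2
    have h2 : (2 : ℤ) ∣ a ^ 2 := ⟨(p : ℤ) - 3 * b ^ 2, by linarith⟩
    obtain ⟨a', rfl⟩ := Int.prime_two.dvd_of_dvd_pow h2
    exact Or.inr ⟨a', b, by nlinarith⟩
  · -- k = 3
    have h3 : (3 : ℤ) ∣ a ^ 2 := ⟨(p : ℤ) - 2 * b ^ 2, by linarith⟩
    obtain ⟨a', rfl⟩ := Int.prime_three.dvd_of_dvd_pow h3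
    exact Or.inr ⟨b, a', by nlinarith⟩
  · -- k = 4
    have h2 : (2 : ℤ) ∣ a ^ 2 := ⟨2 * (p : ℤ) - 3 * b ^ 2, by linarith⟩
    obtain ⟨a', rfl⟩ := Int.prime_two.dvd_of_dvd_pow h2
    have h2b : (2 : ℤ) ∣ b ^ 2 := by
      have hd : (2 : ℤ) ∣ 3 * b ^ 2 := ⟨(p : ℤ) - a' ^ 2, by nlinarith⟩
      rcases (Int.prime_two.dvd_mul.mp hd) with h | h
      · norm_num at h
      · exact h
    obtain ⟨b', rfl⟩ := Int.prime_two.dvd_of_dvd_pow h2b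
    exact Or.inl ⟨a', b', by nlinarith⟩
  · -- k = 5
    have h5 : (5 : ℤ) ∣ (a - 2 * b) * (a + 2 * b) := ⟨(p : ℤ) - 2 * b ^ 2, by ring_nf; nlinarith⟩
    rcases ((by norm_num : Prime (5:ℤ)).dvd_mul.mp h5) with h | h
    · obtain ⟨t, ht⟩ := h
      have ha : a = 5 * t + 2 * b := by linarith
      subst ha
      refine Or.inr ⟨t + b, t, ?_⟩
      have h5p : 5 * (p : ℤ) = 5 * (2 * (t + b) ^ 2 + 3 * t ^ 2) := by nlinarith
      linarith
    · obtain ⟨t, ht⟩ := h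
      have ha : a = 5 * t - 2 * b := by linarith
      subst ha
      refine Or.inr ⟨t - b, t, ?_⟩
      have h5p : 5 * (p : ℤ) = 5 * (2 * (t - b) ^ 2 + 3 * t ^ 2) := by nlinarith
      linarith
  · -- k = 6
    have h2 : (2 : ℤ) ∣ a ^ 2 := ⟨3 * (p : ℤ) - 3 * b ^ 2, by linarith⟩
    obtain ⟨a₁, rfl⟩ := Int.prime_two.dvd_of_dvd_pow h2
    have h3 : (3 : ℤ) ∣ a₁ ^ 2 := by
      have hd : (3 : ℤ) ∣ 2 * a₁ ^ 2 := ⟨(p : ℤ) - b ^ 2, by nlinarith⟩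
      rcases (Int.prime_three.dvd_mul.mp hd) with h | h
      · norm_num at h
      · exact h
    obtain ⟨a₂, rfl⟩ := Int.prime_three.dvd_of_dvd_pow h3
    exact Or.inl ⟨b, a₂, by nlinarith⟩

theorem euler_e164_thm29 (p : ℕ) (hp : p.Prime) :
    ((p % 24 = 1 ∨ p % 24 = 7) → ∃ a b : ℤ, (p : ℤ) = a ^ 2 + 6 * b ^ 2) ∧
    ((p % 24 = 5 ∨ p % 24 = 11) → ∃ a b : ℤ, (p : ℤ) = 2 * a ^ 2 + 3 * b ^ 2) := by
  have hform2 : ∀ x y : ZMod 8, 2 * x ^ 2 + 3 * y ^ 2 ≠ 1 ∧ 2 * x ^ 2 + 3 * y ^ 2 ≠ 7 := by decide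
  have hform1 : ∀ x y : ZMod 8, x ^ 2 + 6 * y ^ 2 ≠ 3 ∧ x ^ 2 + 6 * y ^ 2 ≠ 5 := by decide
  constructor
  · intro h
    rcases euler_rep p hp (by tauto) with h1 | ⟨x, y, hx⟩
    · exact h1
    · exfalso
      have hcast : ((p : ℕ) : ZMod 8) = 2 * (x : ZMod 8) ^ 2 + 3 * (y : ZMod 8) ^ 2 := by
        have := congrArg (fun z : ℤ => (z : ZMod 8)) hx
        push_cast at this
        exact this
      have hp8 : p % 8 = 1 ∨ p % 8 = 7 := by omega
      rcases hp8 with h8 | h8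
      · have : ((p : ℕ) : ZMod 8) = 1 := by
          rw [← ZMod.natCast_mod p 8, h8]; norm_num
        exact (hform2 (x : ZMod 8) (y : ZMod 8)).1 (by rw [← hcast, this])
      · have : ((p : ℕ) : ZMod 8) = 7 := by
          rw [← ZMod.natCast_mod p 8, h8]; norm_num
        exact (hform2 (x : ZMod 8) (y : ZMod 8)).2 (by rw [← hcast, this])
  · intro h
    rcases euler_rep p hp (by tauto) with ⟨x, y, hx⟩ | h1
    · exfalso
      have hcast : ((p : ℕ) : ZMod 8) = (x : ZMod 8) ^ 2 + 6 * (y : ZMod 8) ^ 2 := by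
        have := congrArg (fun z : ℤ => (z : ZMod 8)) hx
        push_cast at this
        exact this
      have hp8 : p % 8 = 5 ∨ p % 8 = 3 := by omega
      rcases hp8 with h8 | h8
      · have : ((p : ℕ) : ZMod 8) = 5 := by
          rw [← ZMod.natCast_mod p 8, h8]; norm_num
        exact (hform1 (x : ZMod 8) (y : ZMod 8)).2 (by rw [← hcast, this])
      · have : ((p : ℕ) : ZMod 8) = 3 := by
          rw [← ZMod.natCast_mod p 8, h8]; norm_num
        exact (hform1 (x : ZMod 8) (y : ZMod 8)).1 (by rw [← hcast, this])
    · exact h1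
end

section
/- No integer of the form 4abc - b - c with a, b, c positive integers is a perfect square. -/
/-!
If `4abc - b - c = d²`, then multiplying by `4a` gives `(4ab - 1)(4ac - 1) = 4ad² + 1`, so
`-a ≡ (2ad)²` modulo `n = 4ab - 1`. But `n ≡ -1 (mod 4a)`, so by reciprocity `J(a | n) = J(a | 4a - 1)`,
which is `1` because `a ≡ (2a)² (mod 4a - 1)`; and `n ≡ 3 (mod 4)` gives `J(-a | n) = -J(a | n) = -1`.
-/

open NumberTheorySymbols

theorem Nat.mul_sub_one_mod_left {m k : ℕ} (hm : 0 < m) (hk : 0 < k) :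
    (m * k - 1) % m = m - 1 := by
  obtain ⟨j, rfl⟩ : ∃ j, k = j + 1 := ⟨k - 1, by omega⟩
  have hsplit : m * (j + 1) - 1 = m - 1 + m * j := by rw [mul_add_one]; omega
  rw [hsplit, Nat.add_mul_mod_self_left, Nat.mod_eq_of_lt (by omega)]

theorem Nat.mod_four_eq_three_of_mod_four_mul_eq {a n : ℕ} (ha : 0 < a)
    (hn : n % (4 * a) = 4 * a - 1) : n % 4 = 3 := by
  rw [← Nat.mod_mod_of_dvd n (dvd_mul_right 4 a), hn]
  omega

theorem jacobiSym_self_four_mul_sub_one {a : ℕ} (ha : 0 < a) : J(a | 4 * a - 1) = 1 := by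
  have hcast : ((4 * a - 1 : ℕ) : ℤ) = 4 * a - 1 := by omega
  have hcoprime : Int.gcd (2 * a) (4 * a - 1 : ℕ) = 1 := by
    rw [← Int.isCoprime_iff_gcd_eq_one, hcast]
    exact ⟨2, -1, by ring⟩
  have hsq : (a : ℤ) ≡ (2 * a) ^ 2 [ZMOD ((4 * a - 1 : ℕ) : ℤ)] :=
    Int.modEq_iff_dvd.mpr ⟨a, by rw [hcast]; ring⟩
  rw [jacobiSym.mod_left' hsq, jacobiSym.sq_one' hcoprime]

theorem jacobiSym_eq_one_of_mod_four_mul_eq {a n : ℕ} (ha : 0 < a)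
    (hn : n % (4 * a) = 4 * a - 1) : J(a | n) = 1 := by
  have hmod4 := Nat.mod_four_eq_three_of_mod_four_mul_eq ha hn
  have hodd : Odd n := Nat.odd_iff.mpr (by omega)
  rw [jacobiSym.mod_right' a hodd, hn, jacobiSym_self_four_mul_sub_one ha]

theorem not_isSquare_neg_of_mod_four_mul_eq {a n : ℕ} (ha : 0 < a)
    (hn : n % (4 * a) = 4 * a - 1) : ¬ IsSquare ((-a : ℤ) : ZMod n) := by
  have hmod4 := Nat.mod_four_eq_three_of_mod_four_mul_eq ha hn
  have hodd : Odd n := Nat.odd_iff.mpr (by omega)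
  apply ZMod.nonsquare_of_jacobiSym_eq_neg_one
  rw [jacobiSym.neg _ hodd, ZMod.χ₄_nat_three_mod_four hmod4,
    jacobiSym_eq_one_of_mod_four_mul_eq ha hn, mul_one]

theorem isSquare_neg_of_four_mul_mul_mul_sub_sub_eq_mul_self {a b : ℕ} (ha : 0 < a) (hb : 0 < b)
    {c d : ℤ} (hd : 4 * a * b * c - b - c = d * d) :
    IsSquare ((-a : ℤ) : ZMod (4 * a * b - 1)) := by
  have hcast : ((4 * a * b - 1 : ℕ) : ℤ) = 4 * a * b - 1 := by
    have : 1 ≤ 4 * a * b := Nat.one_le_iff_ne_zero.mpr (by positivity)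
    push_cast [this]
    ring
  refine ⟨((2 * a * d : ℤ) : ZMod (4 * a * b - 1)), ?_⟩
  rw [← Int.cast_mul, ZMod.intCast_eq_intCast_iff, hcast]
  -- `(4ab - 1)(4ac - 1) = 4ad² + 1`
  exact Int.modEq_iff_dvd.mpr ⟨4 * a ^ 2 * c - a, by linear_combination (-4 * (a : ℤ) ^ 2) * hd⟩

theorem euler_e164_cor1_general (a b c : ℤ) (ha : 0 < a) (hb : 0 < b) :
    ¬ IsSquare (4 * a * b * c - b - c) := by
  rintro ⟨d, hd⟩
  lift a to ℕ using ha.le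
  lift b to ℕ using hb.le
  exact not_isSquare_neg_of_mod_four_mul_eq (by omega)
    (Nat.mul_sub_one_mod_left (by omega) (by omega))
    (isSquare_neg_of_four_mul_mul_mul_sub_sub_eq_mul_self (by omega) (by omega) hd)

theorem euler_e164_cor1 (a b c : ℤ) (ha : 0 < a) (hb : 0 < b) (hc : 0 < c) :
    ¬ IsSquare (4 * a * b * c - b - c) :=
  euler_e164_cor1_general a b c ha hb
end

section
/- No integer of the form 4mn - (m + n) with m, n positive integers is a perfect square. -/
/-!
Since `(4m - 1)(4n - 1) = 4(4mn - m - n) + 1`, a square value `k ^ 2` would make `4m - 1`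
a divisor of `(2k) ^ 2 + 1`. But `-1` is a square modulo a prime `p` only when `p % 4 ≠ 3`,
and residues in `{0, 1, 2}` are closed under multiplication mod `4`, so no natural divisor of
`x ^ 2 + 1` is `≡ 3 (mod 4)`.
-/

theorem Nat.mod_four_ne_three_of_isSquare_neg_one {n : ℕ} (hs : IsSquare (-1 : ZMod n)) :
    n % 4 ≠ 3 := by
  induction n using induction_on_primes with
  | zero => decide
  | one => decide
  | prime_mul p a hp ih =>
    have : Fact p.Prime := ⟨hp⟩
    have hp4 : p % 4 ≠ 3 :=
      ZMod.exists_sq_eq_neg_one_iff.mp (ZMod.isSquare_neg_one_of_dvd (dvd_mul_right p a) hs)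
    have ha4 : a % 4 ≠ 3 := ih (ZMod.isSquare_neg_one_of_dvd (dvd_mul_left a p) hs)
    rw [Nat.mul_mod]
    have hp4' := Nat.mod_lt p (by norm_num : 4 > 0)
    have ha4' := Nat.mod_lt a (by norm_num : 4 > 0)
    interval_cases p % 4 <;> interval_cases a % 4 <;> simp_all

theorem Int.emod_four_ne_three_of_dvd_sq_add_one {n x : ℤ} (hn : 0 ≤ n) (h : n ∣ x ^ 2 + 1) :
    n % 4 ≠ 3 := by
  lift n to ℕ using hn
  have hs : IsSquare (-1 : ZMod n) := by
    refine ⟨x, ?_⟩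
    have hx : ((x ^ 2 + 1 : ℤ) : ZMod n) = 0 := (ZMod.intCast_zmod_eq_zero_iff_dvd _ _).mpr h
    push_cast at hx
    linear_combination -hx
  exact_mod_cast Nat.mod_four_ne_three_of_isSquare_neg_one hs

theorem euler_e164_scholion2_general (m n : ℤ) (hm : 0 < m) :
    ¬ IsSquare (4 * m * n - (m + n)) := by
  rintro ⟨k, hk⟩
  have hdvd : 4 * m - 1 ∣ (2 * k) ^ 2 + 1 :=
    ⟨4 * n - 1, by linear_combination -4 * hk⟩
  exact Int.emod_four_ne_three_of_dvd_sq_add_one (by omega) hdvd (by omega)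

theorem euler_e164_scholion2 (m n : ℤ) (hm : 0 < m) (hn : 0 < n) :
    ¬ IsSquare (4 * m * n - (m + n)) :=
  euler_e164_scholion2_general m n hm
end
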